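/- For a permutation g of {1,...,n} and a subset σ ⊆ {1,...,n}, let g' be the unique permutation agreeing with g as a map of sets on the partition (σ, σᶜ) that is increasing on σ and increasing on σᶜ (i.e., g' sends σ bijectively onto g(σ) preserving order, and σᶜ onto g(σᶜ) preserving order). Then sgn(g') = ∏_{i ∈ σ} (-1)^{g'(i) - i}. -/

import Mathlib

/-!
Count inversions. As `g'` is increasing on `σ` and on `σᶜ`, every inversion pairs some `i ∈ σ`
with some `j ∈ σᶜ`, and it does so exactly when one but not both of `j < i` and `g' j < g' i`
hold. Splitting the counts `i = #{k | k < i}` and `g' i = #{k | g' k < g' i}` over `σ` and `σᶜ`,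
the `σ`-parts agree because `g'` preserves order on `σ`; hence
`g' i - i = #{j ∈ σᶜ | g' j < g' i} - #{j ∈ σᶜ | j < i}`, which has the parity of the number of
inversions involving `i`.
-/

open Finset

namespace Equiv.Perm

variable {n : ℕ} (f : Perm (Fin n))

def inversionSign (i j : Fin n) : ℤˣ :=
  if i < j ∧ f j < f i then -1 else 1

theorem sign_eq_prod_inversionSign : sign f = ∏ i, ∏ j, f.inversionSign i j := by
  rw [sign_eq_prod_prod_Ioi]
  refine prod_congr rfl fun i _ => ?_
  rw [← filter_lt_eq_Ioi, prod_filter]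
  refine prod_congr rfl fun j _ => ?_
  by_cases hij : i < j
  · rcases (f.injective.ne hij.ne).lt_or_gt with h | h <;>
      simp [inversionSign, hij, h, h.not_gt]
  · simp [inversionSign, hij]

theorem card_filter_apply_lt (i : Fin n) : #{j | f j < f i} = f i := by
  have : ({j | f j < f i} : Finset (Fin n)).map f.toEmbedding = Iio (f i) := by
    ext k; simp
  rw [← card_map f.toEmbedding, this, Fin.card_Iio]

variable {f} {s : Finset (Fin n)}

theorem prod_inversionSign_eq_prod_compl (hs : StrictMonoOn f s) {i : Fin n} (hi : i ∈ s) :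
    ∏ j, f.inversionSign i j = ∏ j ∈ sᶜ, f.inversionSign i j :=
  (prod_subset (subset_univ _) fun j _ hj =>
    if_neg fun h => (hs hi (by simpa using hj) h.1).not_gt h.2).symm

theorem sign_eq_prod_prod_compl (hs : StrictMonoOn f s) (hsc : StrictMonoOn f ↑sᶜ) :
    sign f = ∏ i ∈ s, ∏ j ∈ sᶜ, f.inversionSign i j * f.inversionSign j i := by
  calc sign f
      = (∏ i ∈ s, ∏ j, f.inversionSign i j) * ∏ i ∈ sᶜ, ∏ j, f.inversionSign i j := by
        rw [sign_eq_prod_inversionSign, prod_mul_prod_compl]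
    _ = (∏ i ∈ s, ∏ j ∈ sᶜ, f.inversionSign i j) * ∏ i ∈ sᶜ, ∏ j ∈ s, f.inversionSign i j := by
        rw [prod_congr rfl fun i => prod_inversionSign_eq_prod_compl hs,
          prod_congr rfl fun i hi => (prod_inversionSign_eq_prod_compl hsc hi).trans
            (by rw [compl_compl])]
    _ = ∏ i ∈ s, ∏ j ∈ sᶜ, f.inversionSign i j * f.inversionSign j i := by
        simp only [prod_mul_distrib]
        rw [prod_comm (s := sᶜ)]

theorem inversionSign_mul_inversionSign {i j : Fin n} (hij : i ≠ j) :
    f.inversionSign i j * f.inversionSign j i =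
      (if j < i then -1 else 1) * (if f j < f i then -1 else 1) := by
  have hf : f i ≠ f j := f.injective.ne hij
  rcases hij.lt_or_gt with h | h <;> rcases hf.lt_or_gt with h' | h' <;>
    simp [inversionSign, h, h', h.not_gt, h'.not_gt]

theorem apply_add_card_compl_filter_lt (hs : StrictMonoOn f s) {i : Fin n} (hi : i ∈ s) :
    (f i : ℕ) + #{j ∈ sᶜ | j < i} = i + #{j ∈ sᶜ | f j < f i} := by
  have hsplit (p : Fin n → Prop) [DecidablePred p] :
      #{j | p j} = #{j ∈ s | p j} + #{j ∈ sᶜ | p j} := by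
    simp only [card_filter, sum_add_sum_compl]
  have hreflect : #{j ∈ s | j < i} = #{j ∈ s | f j < f i} :=
    congrArg card (filter_congr fun j hj => (hs.lt_iff_lt hj hi).symm)
  have hlt : #{j | j < i} = i := by rw [filter_gt_eq_Iio, Fin.card_Iio]
  have hflt := card_filter_apply_lt f i
  rw [hsplit] at hlt hflt
  omega

theorem prod_compl_inversionSign_mul_inversionSign (hs : StrictMonoOn f s) {i : Fin n}
    (hi : i ∈ s) :
    ∏ j ∈ sᶜ, f.inversionSign i j * f.inversionSign j i =
      (-1) ^ (((f i : ℕ) : ℤ) - ((i : ℕ) : ℤ)) := by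
  have hcount := apply_add_card_compl_filter_lt hs hi
  have hexp : ((f i : ℕ) : ℤ) - ((i : ℕ) : ℤ) = #{j ∈ sᶜ | f j < f i} - #{j ∈ sᶜ | j < i} := by
    omega
  rw [prod_congr rfl fun j hj => inversionSign_mul_inversionSign
      (ne_of_mem_of_not_mem hi (mem_compl.1 hj)), prod_mul_distrib]
  simp only [prod_ite, prod_const, one_pow, mul_one]
  rw [hexp, zpow_sub, zpow_natCast, zpow_natCast, Int.units_inv_eq_self, mul_comm]

end Equiv.Perm

theorem sign_of_shuffle_general (n : ℕ) (σ : Finset (Fin n)) (g' : Equiv.Perm (Fin n))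
    (hmono : ∀ i ∈ σ, ∀ j ∈ σ, i < j → g' i < g' j)
    (hmonoc : ∀ i ∈ σᶜ, ∀ j ∈ σᶜ, i < j → g' i < g' j) :
    Equiv.Perm.sign g' = ∏ i ∈ σ, (-1 : ℤˣ) ^ (((g' i : ℕ) : ℤ) - ((i : ℕ) : ℤ)) := by
  have hσ : StrictMonoOn g' σ := fun i hi j hj => hmono i hi j hj
  have hσc : StrictMonoOn g' ↑σᶜ := fun i hi j hj => hmonoc i hi j hj
  rw [Equiv.Perm.sign_eq_prod_prod_compl hσ hσc]
  exact prod_congr rfl fun i hi => Equiv.Perm.prod_compl_inversionSign_mul_inversionSign hσ hi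

/-- if `g'` agrees with `g` setwise on `σ` and on `σᶜ` and is increasing on
each of them, then `sgn g' = ∏_{i ∈ σ} (-1)^(g'(i) - i)`. -/
theorem sign_of_shuffle (n : ℕ) (σ : Finset (Fin n)) (g g' : Equiv.Perm (Fin n))
    (himg : σ.image g' = σ.image g)
    (himgc : σᶜ.image g' = σᶜ.image g)
    (hmono : ∀ i ∈ σ, ∀ j ∈ σ, i < j → g' i < g' j)
    (hmonoc : ∀ i ∈ σᶜ, ∀ j ∈ σᶜ, i < j → g' i < g' j) :
    Equiv.Perm.sign g' = ∏ i ∈ σ, (-1 : ℤˣ) ^ (((g' i : ℕ) : ℤ) - ((i : ℕ) : ℤ)) :=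
  sign_of_shuffle_general n σ g' hmono hmonoc
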